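/- Let (Z_j)_{j ∈ ℕ} be a sequence of independent random variables, each sub-Gaussian with variance parameter 1. Then for every α ∈ (0,1), P(⋃_{k=1}^∞ {Σ_{j=1}^k Z_j ≥ u_α(k)}) ≤ α, where u_α(k) := 1.7 √(k (log log(2k) + 0.72 log(5.2/α))). -/

import Mathlib

/-!
Each sub-Gaussian increment gives, after normalising `exp (t * Z j)` by its mean, a product
martingale dominating `exp (t * S k - k * t ^ 2 / 2)`, so Doob's maximal inequality yields Ville's
inequality `P (∃ k, a ≤ t * S k - k * t ^ 2 / 2) ≤ exp (-a)` for every fixed slope `t`.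
Time is cut into epochs `2 ^ m ≤ k < 2 ^ (m + 1)`; on epoch `m` one such linear boundary, tuned at
`k = √2 * 2 ^ m`, stays below `u_α`, and the error budgets `exp (-a_m)` are bounded by
`α * ((m + 1) * log 2 * 5.2 ^ 0.72) ^ (-7/5)`, whose sum over `m` is at most `α`.
-/

open MeasureTheory ProbabilityTheory Real Set
open scoped ENNReal NNReal

section
variable {Ω : Type*} [MeasurableSpace Ω] {P : Measure Ω}

lemma hasSubgaussianMGF_of_lintegral_exp_le {X : Ω → ℝ} (hX : Measurable X) {c : ℝ≥0}
    (h : ∀ t : ℝ,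
      ∫⁻ ω, ENNReal.ofReal (exp (t * X ω)) ∂P ≤ ENNReal.ofReal (exp (c * t ^ 2 / 2))) :
    HasSubgaussianMGF X c P := by
  have hint : ∀ t : ℝ, Integrable (fun ω ↦ exp (t * X ω)) P := fun t ↦
    ⟨(measurable_const.mul hX).exp.aestronglyMeasurable,
      (hasFiniteIntegral_iff_ofReal (ae_of_all _ fun _ ↦ (exp_pos _).le)).2
        ((h t).trans_lt ENNReal.ofReal_lt_top)⟩
  refine ⟨hint, fun t ↦ ?_⟩
  rw [← ENNReal.ofReal_le_ofReal_iff (exp_pos _).le, mgf,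
    ofReal_integral_eq_lintegral_ofReal (hint t) (ae_of_all _ fun _ ↦ (exp_pos _).le)]
  exact h t

variable [IsProbabilityMeasure P] {Y : ℕ → Ω → ℝ}

theorem martingale_prod_range_of_iIndepFun (hmeas : ∀ j, Measurable (Y j))
    (hindep : iIndepFun Y P) (hint : ∀ j, Integrable (Y j) P) (hmean : ∀ j, P[Y j] = 1) :
    Martingale (fun n ↦ ∏ j ∈ Finset.range (n + 1), Y j)
      (Filtration.natural Y fun j ↦ (hmeas j).stronglyMeasurable) P := by
  set ℱ := Filtration.natural Y fun j ↦ (hmeas j).stronglyMeasurable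
  have hadapted : StronglyAdapted ℱ fun n ↦ ∏ j ∈ Finset.range (n + 1), Y j := fun n ↦
    Finset.stronglyMeasurable_prod _ fun j hj ↦ (Filtration.stronglyAdapted_natural _ j).mono
      (ℱ.mono (Nat.lt_succ_iff.mp (Finset.mem_range.mp hj)))
  have hprod : ∀ n, Integrable (∏ j ∈ Finset.range (n + 1), Y j) P := by
    intro n
    induction n with
    | zero => simpa using hint 0
    | succ n ih =>
      rw [Finset.prod_range_succ]
      exact (hindep.indepFun_finsetProd_of_notMem hmeas (by simp)).integrable_mul ih (hint _)
  refine martingale_nat hadapted hprod fun n ↦ ?_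
  have hpull := condExp_mul_of_stronglyMeasurable_left (m := ℱ n) (hadapted n)
    (by rw [← Finset.prod_range_succ]; exact hprod (n + 1)) (hint (n + 1))
  have hnext := hindep.condExp_natural_ae_eq_of_lt (fun j ↦ (hmeas j).stronglyMeasurable)
    (Nat.lt_succ_self n)
  rw [Finset.prod_range_succ _ (n + 1)]
  filter_upwards [hpull, hnext] with ω h1 h2
  rw [h1, Pi.mul_apply, h2, hmean, mul_one]

theorem mul_measure_exists_le_prod_range_le (hmeas : ∀ j, Measurable (Y j))
    (hindep : iIndepFun Y P) (hint : ∀ j, Integrable (Y j) P) (hmean : ∀ j, P[Y j] = 1)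
    (hnonneg : ∀ j ω, 0 ≤ Y j ω) (ε : ℝ≥0) :
    ε * P {ω | ∃ k, (ε : ℝ) ≤ ∏ j ∈ Finset.range (k + 1), Y j ω} ≤ 1 := by
  have hM := martingale_prod_range_of_iIndepFun hmeas hindep hint hmean
  have hM0 : 0 ≤ fun n ↦ ∏ j ∈ Finset.range (n + 1), Y j :=
    fun n ω ↦ by simpa using Finset.prod_nonneg fun j _ ↦ hnonneg j ω
  have hfinite : ∀ n, ε * P {ω | ∃ k ≤ n, (ε : ℝ) ≤ ∏ j ∈ Finset.range (k + 1), Y j ω} ≤ 1 := by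
    intro n
    have hdoob := maximal_ineq hM.submartingale hM0 (ε := ε) n
    simp only [Finset.le_sup'_iff, Finset.mem_range, Nat.lt_succ_iff, Finset.prod_apply] at hdoob
    refine hdoob.trans (ENNReal.ofReal_le_one.2 ?_)
    calc _ ≤ ∫ ω, (∏ j ∈ Finset.range (n + 1), Y j) ω ∂P := by
          simp only [Finset.prod_apply]
          exact setIntegral_le_integral (by simpa only [Finset.prod_fn] using hM.integrable n)
            (ae_of_all _ fun ω ↦ Finset.prod_nonneg fun j _ ↦ hnonneg j ω)
      _ = ∫ ω, (∏ j ∈ Finset.range (0 + 1), Y j) ω ∂P := by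
          simpa using (hM.setIntegral_eq (Nat.zero_le n) MeasurableSet.univ).symm
      _ = 1 := by simpa using hmean 0
  have hunion : {ω | ∃ k, (ε : ℝ) ≤ ∏ j ∈ Finset.range (k + 1), Y j ω}
      = ⋃ n, {ω | ∃ k ≤ n, (ε : ℝ) ≤ ∏ j ∈ Finset.range (k + 1), Y j ω} := by
    ext ω; simp only [mem_ofPred_eq, mem_iUnion]
    exact ⟨fun ⟨k, hk⟩ ↦ ⟨k, k, le_rfl, hk⟩, fun ⟨_, k, _, hk⟩ ↦ ⟨k, hk⟩⟩
  have hmono : Monotone fun n ↦ {ω | ∃ k ≤ n, (ε : ℝ) ≤ ∏ j ∈ Finset.range (k + 1), Y j ω} :=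
    fun n n' hn ω ⟨k, hk, h⟩ ↦ ⟨k, hk.trans hn, h⟩
  rw [hunion, hmono.measure_iUnion, ENNReal.mul_iSup]
  exact iSup_le hfinite

theorem measure_exists_le_mul_sum_sub_le_exp_neg {Z : ℕ → Ω → ℝ} {c : ℝ≥0}
    (hmeas : ∀ j, Measurable (Z j)) (hindep : iIndepFun Z P)
    (hsub : ∀ j, HasSubgaussianMGF (Z j) c P) (t a : ℝ) :
    P {ω | ∃ k : ℕ, a ≤ t * ∑ j ∈ Finset.range (k + 1), Z j ω - (k + 1) * (c * t ^ 2 / 2)}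
      ≤ ENNReal.ofReal (exp (-a)) := by
  set Y : ℕ → Ω → ℝ := fun j ω ↦ exp (t * Z j ω) / mgf (Z j) P t
  have hmgf_pos : ∀ j, 0 < mgf (Z j) P t := fun j ↦ mgf_pos ((hsub j).integrable_exp_mul t)
  have hYmeas : ∀ j, Measurable (Y j) := fun j ↦ ((hmeas j).const_mul t).exp.div_const _
  have hYindep : iIndepFun Y P :=
    hindep.comp (fun j x ↦ exp (t * x) / mgf (Z j) P t) fun j ↦ by fun_prop
  have hYmean : ∀ j, P[Y j] = 1 := fun j ↦ by
    rw [integral_div, ← mgf, div_self (hmgf_pos j).ne']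
  have hdom : ∀ ω k, exp (t * ∑ j ∈ Finset.range (k + 1), Z j ω - (k + 1) * (c * t ^ 2 / 2))
      ≤ ∏ j ∈ Finset.range (k + 1), Y j ω := by
    intro ω k
    have hsum : t * ∑ j ∈ Finset.range (k + 1), Z j ω - (k + 1) * (c * t ^ 2 / 2)
        = ∑ j ∈ Finset.range (k + 1), (t * Z j ω - c * t ^ 2 / 2) := by
      rw [Finset.sum_sub_distrib, Finset.mul_sum, Finset.sum_const, Finset.card_range,
        nsmul_eq_mul, Nat.cast_add_one]
    rw [hsum, exp_sum]
    refine Finset.prod_le_prod (fun j _ ↦ (exp_pos _).le) fun j _ ↦ ?_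
    rw [exp_sub]
    exact div_le_div_of_nonneg_left (exp_pos _).le (hmgf_pos j) ((hsub j).mgf_le t)
  have hville := mul_measure_exists_le_prod_range_le hYmeas hYindep
    (fun j ↦ ((hsub j).integrable_exp_mul t).div_const _) hYmean
    (fun j ω ↦ div_nonneg (exp_pos _).le (hmgf_pos j).le) (exp a).toNNReal
  rw [exp_neg, ENNReal.ofReal_inv_of_pos (exp_pos a), ENNReal.le_inv_iff_mul_le, mul_comm]
  refine le_trans (mul_le_mul_right (measure_mono ?_) _) hville
  rintro ω ⟨k, hk⟩
  refine ⟨k, ?_⟩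
  rw [Real.coe_toNNReal _ (exp_pos a).le]
  exact (exp_le_exp.2 hk).trans (hdom ω k)

end

lemma le_mul_sub_of_sqrt_le {a h k S : ℝ} (hh : 0 < h) (hhk : h ≤ k) (hk : k ≤ 2 * h)
    (hS : √((2 + 3 / √2) / 2 * a * k) ≤ S) :
    a ≤ √(2 * a / (√2 * h)) * S - k * √(2 * a / (√2 * h)) ^ 2 / 2 := by
  set r := √2
  have hr0 : 0 < r := by positivity
  have hr2 : r ^ 2 = 2 := sq_sqrt zero_le_two
  rcases le_or_gt a 0 with ha | ha
  · rw [sqrt_eq_zero'.2 (div_nonpos_of_nonpos_of_nonneg (by linarith) (by positivity))]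
    simpa using ha
  set t := √(2 * a / (r * h))
  have ht : 0 < t := sqrt_pos.2 (by positivity)
  have ht2 : t ^ 2 = 2 * a / (r * h) := sq_sqrt (by positivity)
  obtain ⟨x, rfl⟩ : ∃ x, k = r * h * x := ⟨k / (r * h), by field_simp⟩
  -- with `k = √2 h x`, the claim reduces to `(1 + x)² ≤ (2 + 3/√2) x`, i.e. `x ∈ [1/√2, √2]`
  have hx : (x - 1 / r) * (x - r) ≤ 0 := by
    have hlo : 1 / r ≤ x := by
      rw [div_le_iff₀ hr0]; nlinarith
    have hhi : x ≤ r := le_of_mul_le_mul_left (a := r * h) (by nlinarith) (by positivity)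
    nlinarith
  have hsq : (a + r * h * x * t ^ 2 / 2) ^ 2 ≤ t ^ 2 * ((2 + 3 / r) / 2 * a * (r * h * x)) := by
    have e1 : a + r * h * x * t ^ 2 / 2 = a * (1 + x) := by rw [ht2]; field_simp
    have e2 : t ^ 2 * ((2 + 3 / r) / 2 * a * (r * h * x)) = a ^ 2 * (x * (2 + 3 / r)) := by
      rw [ht2]; field_simp
    have e3 : (1 + x) ^ 2 = x * (2 + 3 / r) + (x - 1 / r) * (x - r) := by
      field_simp; linear_combination x * hr2
    rw [e1, e2, mul_pow, e3]
    nlinarith [sq_nonneg a]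
  have hle : a + r * h * x * t ^ 2 / 2 ≤ t * √((2 + 3 / r) / 2 * a * (r * h * x)) := by
    rw [show t * √((2 + 3 / r) / 2 * a * (r * h * x))
        = √(t ^ 2 * ((2 + 3 / r) / 2 * a * (r * h * x))) by
      rw [sqrt_mul (sq_nonneg _), sqrt_sq ht.le]]
    exact le_sqrt_of_sq_le hsq
  nlinarith [mul_le_mul_of_nonneg_left hS ht.le]

lemma rpow_div_pow {x : ℝ} (hx : 0 ≤ x) (p : ℝ) {n : ℕ} (hn : n ≠ 0) :
    (x ^ (p / n)) ^ n = x ^ p := by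
  rw [← rpow_natCast, ← rpow_mul hx, div_mul_cancel₀ _ (by exact_mod_cast hn)]

lemma le_rpow_div_of_pow_le {x r : ℝ} {p n : ℕ} (hx : 0 ≤ x) (hn : n ≠ 0)
    (h : r ^ n ≤ x ^ p) : r ≤ x ^ ((p : ℝ) / n) := by
  refine le_of_pow_le_pow_left₀ hn (rpow_nonneg hx _) ?_
  rwa [rpow_div_pow hx _ hn, rpow_natCast]

lemma rpow_neg_div_le_of_one_le_pow_mul {x r : ℝ} {p n : ℕ} (hx : 0 ≤ x) (hr : 0 < r)
    (hn : n ≠ 0) (h : 1 ≤ r ^ n * x ^ p) : x ^ (-((p : ℝ) / n)) ≤ r := by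
  rw [rpow_neg hx]
  refine inv_le_of_inv_le₀ hr (le_rpow_div_of_pow_le hx hn ?_)
  rwa [inv_pow, inv_le_iff_one_le_mul₀ (by positivity), mul_comm]

lemma rpow_neg_seven_fifths_le_sub {y : ℝ} (hy : 2 ≤ y) :
    y ^ (-(7 / 5 : ℝ)) ≤ 5 / 2 * ((y - 1) ^ (-(2 / 5 : ℝ)) - y ^ (-(2 / 5 : ℝ))) := by
  have hy0 : 0 < y := by linarith
  have hy1 : 0 < y - 1 := by linarith
  have hmul : y * y ^ (-(7 / 5 : ℝ)) = y ^ (-(2 / 5 : ℝ)) := by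
    rw [← rpow_one_add' hy0.le (by norm_num)]; norm_num
  -- fifth powers reduce this to the polynomial inequality `(y + 2/5)^5 (y - 1)^2 ≤ y^7`
  have key : (y + 2 / 5) * y ^ (-(7 / 5 : ℝ)) ≤ (y - 1) ^ (-(2 / 5 : ℝ)) := by
    refine le_of_pow_le_pow_left₀ (n := 5) (by norm_num) (by positivity) ?_
    rw [mul_pow, ← rpow_natCast (y ^ _), ← rpow_mul hy0.le, ← rpow_natCast ((y - 1) ^ _),
      ← rpow_mul hy1.le]
    norm_num
    rw [← div_eq_mul_inv, div_le_iff₀ (by positivity), ← div_eq_inv_mul,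
      le_div_iff₀ (by positivity)]
    nlinarith [pow_nonneg (sub_nonneg.2 hy) 3, pow_nonneg (sub_nonneg.2 hy) 4,
      pow_nonneg (sub_nonneg.2 hy) 5, sq_nonneg (y - 2)]
  nlinarith [rpow_nonneg hy0.le (-(7 / 5 : ℝ))]

lemma sum_range_rpow_neg_seven_fifths_le (M : ℕ) :
    ∑ m ∈ Finset.range M, ((m : ℝ) + 1) ^ (-(7 / 5 : ℝ)) ≤ 3.15 := by
  -- `5/2 * M ^ (-2/5) = ∫ x in M..∞, x ^ (-7/5)` dominates the tail, so `g` decreases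
  set g : ℕ → ℝ := fun M ↦
    ∑ m ∈ Finset.range M, ((m : ℝ) + 1) ^ (-(7 / 5 : ℝ)) + 5 / 2 * (M : ℝ) ^ (-(2 / 5 : ℝ))
  have hstep : ∀ M, 1 ≤ M → g (M + 1) ≤ g M := by
    intro M hM
    have hM' : (1 : ℝ) ≤ M := by exact_mod_cast hM
    have := rpow_neg_seven_fifths_le_sub (y := (M : ℝ) + 1) (by linarith)
    simp only [g, Finset.sum_range_succ, Nat.cast_add_one, add_sub_cancel_right] at this ⊢
    linarith
  have hanti : ∀ M, g (M + 6) ≤ g 6 := by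
    intro M
    induction M with
    | zero => rfl
    | succ M ih => exact (hstep (M + 6) (by omega)).trans ih
  have h7 : ∀ {x r : ℝ}, 0 ≤ x → 0 < r → 1 ≤ r ^ 5 * x ^ 7 → x ^ (-(7 / 5 : ℝ)) ≤ r := by
    intro x r hx hr h
    simpa using rpow_neg_div_le_of_one_le_pow_mul (p := 7) (n := 5) hx hr (by norm_num) h
  have h2 : ∀ {x r : ℝ}, 0 ≤ x → 0 < r → 1 ≤ r ^ 5 * x ^ 2 → x ^ (-(2 / 5 : ℝ)) ≤ r := by
    intro x r hx hr h
    simpa using rpow_neg_div_le_of_one_le_pow_mul (p := 2) (n := 5) hx hr (by norm_num) h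
  have hg6 : g 6 ≤ 3.15 := by
    simp only [g, Finset.sum_range_succ, Finset.sum_range_zero]
    norm_num
    linarith [h7 (x := 2) (r := 0.37893) (by norm_num) (by norm_num) (by norm_num),
      h7 (x := 3) (r := 0.2148) (by norm_num) (by norm_num) (by norm_num),
      h7 (x := 4) (r := 0.14359) (by norm_num) (by norm_num) (by norm_num),
      h7 (x := 5) (r := 0.10507) (by norm_num) (by norm_num) (by norm_num),
      h7 (x := 6) (r := 0.0814) (by norm_num) (by norm_num) (by norm_num),
      h2 (x := 6) (r := 0.48836) (by norm_num) (by norm_num) (by norm_num)]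
  calc ∑ m ∈ Finset.range M, ((m : ℝ) + 1) ^ (-(7 / 5 : ℝ))
      ≤ ∑ m ∈ Finset.range (M + 6), ((m : ℝ) + 1) ^ (-(7 / 5 : ℝ)) :=
        Finset.sum_le_sum_of_subset_of_nonneg (Finset.range_subset_range.2 (by omega))
          fun _ _ _ ↦ by positivity
    _ ≤ g (M + 6) := le_add_of_nonneg_right (by positivity)
    _ ≤ g 6 := hanti M
    _ ≤ 3.15 := hg6

lemma log_two_mul_rpow_ge : (2.2716 : ℝ) ≤ log 2 * 5.2 ^ (0.72 : ℝ) := by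
  have h52 : (3.2773 : ℝ) ≤ 5.2 ^ (0.72 : ℝ) := by
    rw [show (0.72 : ℝ) = (18 : ℕ) / (25 : ℕ) by norm_num]
    exact le_rpow_div_of_pow_le (x := 5.2) (r := 3.2773) (p := 18) (n := 25) (by norm_num)
      (by norm_num) (by norm_num)
  nlinarith [log_two_gt_d9]

lemma three_fifteen_le_rpow : (3.15 : ℝ) ≤ (log 2 * 5.2 ^ (0.72 : ℝ)) ^ (7 / 5 : ℝ) :=
  calc (3.15 : ℝ) ≤ 2.2716 ^ (7 / 5 : ℝ) := by
        simpa using le_rpow_div_of_pow_le (x := 2.2716) (r := 3.15) (p := 7) (n := 5) (by norm_num)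
          (by norm_num) (by norm_num)
    _ ≤ _ := rpow_le_rpow (by norm_num) log_two_mul_rpow_ge (by norm_num)

lemma exp_neg_mul_le {α q : ℝ} (hα0 : 0 < α) (hα1 : α ≤ 1) (hq : 7 / 5 ≤ q) (m : ℕ) :
    exp (-(q * (log ((m + 1) * log 2) + 0.72 * log (5.2 / α))))
      ≤ α * (((m : ℝ) + 1) * (log 2 * 5.2 ^ (0.72 : ℝ))) ^ (-(7 / 5 : ℝ)) := by
  set B := log 2 * 5.2 ^ (0.72 : ℝ)
  have hB : 1 ≤ (m + 1) * B := by
    have hB0 : 2.2716 ≤ B := log_two_mul_rpow_ge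
    nlinarith [(Nat.cast_nonneg m : (0 : ℝ) ≤ m)]
  have hlog :
      log ((m + 1) * log 2) + 0.72 * log (5.2 / α) = log ((m + 1) * B) - 0.72 * log α := by
    have hl2 : 0 < log 2 := log_pos one_lt_two
    rw [log_div (by norm_num) hα0.ne', log_mul (by positivity) (by positivity),
      log_mul (by positivity) (by positivity), log_mul hl2.ne' (by positivity),
      log_rpow (by norm_num)]
    ring
  calc exp (-(q * (log ((m + 1) * log 2) + 0.72 * log (5.2 / α))))
      = ((m + 1) * B) ^ (-q) * α ^ (0.72 * q) := by
        rw [hlog, rpow_def_of_pos (by linarith), rpow_def_of_pos hα0, ← exp_add]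
        ring_nf
    _ ≤ ((m + 1) * B) ^ (-(7 / 5 : ℝ)) * α ^ (1 : ℝ) :=
        mul_le_mul (rpow_le_rpow_of_exponent_le hB (by linarith))
          (rpow_le_rpow_of_exponent_ge hα0 hα1 (by linarith)) (by positivity) (by positivity)
    _ = _ := by rw [rpow_one, mul_comm]

/-- `q * D_m` with `D_m = log ((m + 1) * log 2) + A ≤ log (log (2 * k)) + A` on the epoch
`2 ^ m ≤ k < 2 ^ (m + 1)`; `q = 2 * 1.7 ^ 2 / (2 + 3 / √2)` is the largest factor for which the
linear boundary of slope `epochTilt A m` stays below `1.7 * √(k * D_m)` on the whole epoch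
(see `le_mul_sub_of_sqrt_le`). -/
noncomputable def epochExponent (A : ℝ) (m : ℕ) : ℝ :=
  5.78 / (2 + 3 / √2) * (log ((m + 1) * log 2) + A)

noncomputable def epochTilt (A : ℝ) (m : ℕ) : ℝ :=
  √(2 * epochExponent A m / (√2 * 2 ^ m))

lemma seven_fifths_le : (7 / 5 : ℝ) ≤ 5.78 / (2 + 3 / √2) := by
  have h2 : (1.414 : ℝ) ≤ √2 := by
    rw [le_sqrt (by norm_num) (by norm_num)]; norm_num
  rw [le_div_iff₀ (by positivity), ← sub_nonneg]
  have : 3 / √2 ≤ 3 / 1.414 := div_le_div_of_nonneg_left (by norm_num) (by norm_num) h2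
  linarith

lemma exists_epochExponent_le {A S : ℝ} {k : ℕ} (hk : 1 ≤ k)
    (h : 1.7 * √(k * (log (log (2 * k)) + A)) ≤ S) :
    ∃ m, epochExponent A m ≤ epochTilt A m * S - k * epochTilt A m ^ 2 / 2 := by
  set m := Nat.log 2 k
  have hlo : (2 : ℝ) ^ m ≤ k := by exact_mod_cast Nat.pow_log_le_self 2 (by omega)
  have hhi : (k : ℝ) ≤ 2 * 2 ^ m := by
    have : k < 2 ^ (m + 1) := Nat.lt_pow_succ_log_self one_lt_two k
    rw [← pow_succ']; exact_mod_cast this.le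
  refine ⟨m, le_mul_sub_of_sqrt_le (by positivity) hlo hhi ?_⟩
  have hlog : log ((m + 1) * log 2) ≤ log (log (2 * k)) := by
    have hl2 : 0 < log 2 := log_pos one_lt_two
    refine log_le_log (by positivity) ?_
    rw [← Nat.cast_add_one, ← log_pow]
    exact log_le_log (by positivity) (by rw [pow_succ']; linarith)
  have hq : (2 + 3 / √2) / 2 * (5.78 / (2 + 3 / √2)) = 1.7 ^ 2 := by
    field_simp; norm_num
  calc √((2 + 3 / √2) / 2 * epochExponent A m * k)
      = 1.7 * √(k * (log ((m + 1) * log 2) + A)) := by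
        rw [epochExponent, ← mul_assoc, hq, mul_assoc, sqrt_mul (by norm_num),
          sqrt_sq (by norm_num), mul_comm (log _ + A)]
    _ ≤ 1.7 * √(k * (log (log (2 * k)) + A)) := by gcongr
    _ ≤ S := h

lemma sum_range_exp_neg_epochExponent_le {α : ℝ} (hα0 : 0 < α) (hα1 : α ≤ 1) (M : ℕ) :
    ∑ m ∈ Finset.range M, exp (-epochExponent (0.72 * log (5.2 / α)) m) ≤ α := by
  set B := log 2 * 5.2 ^ (0.72 : ℝ)
  have hB : 0 < B := by
    have : 2.2716 ≤ B := log_two_mul_rpow_ge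
    linarith
  calc ∑ m ∈ Finset.range M, exp (-epochExponent (0.72 * log (5.2 / α)) m)
      ≤ ∑ m ∈ Finset.range M, α * (((m : ℝ) + 1) * B) ^ (-(7 / 5 : ℝ)) :=
        Finset.sum_le_sum fun m _ ↦ exp_neg_mul_le hα0 hα1 seven_fifths_le m
    _ = α * B ^ (-(7 / 5 : ℝ)) * ∑ m ∈ Finset.range M, ((m : ℝ) + 1) ^ (-(7 / 5 : ℝ)) := by
        rw [Finset.mul_sum]
        refine Finset.sum_congr rfl fun m _ ↦ ?_
        rw [mul_rpow (by positivity) hB.le]; ring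
    _ ≤ α * B ^ (-(7 / 5 : ℝ)) * 3.15 :=
        mul_le_mul_of_nonneg_left (sum_range_rpow_neg_seven_fifths_le M) (by positivity)
    _ ≤ α := by
        rw [rpow_neg hB.le, mul_assoc]
        exact mul_le_of_le_one_right hα0.le
          ((inv_mul_le_one₀ (by positivity)).2 three_fifteen_le_rpow)

theorem statement1 {Ω : Type*} [MeasurableSpace Ω] (P : Measure Ω)
    (hP : IsProbabilityMeasure P) (Z : ℕ → Ω → ℝ) (hmeas : ∀ j, Measurable (Z j))
    (hindep : ProbabilityTheory.iIndepFun Z P)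
    (hsub : ∀ j, ∀ t : ℝ,
      ∫⁻ ω, ENNReal.ofReal (Real.exp (t * Z j ω)) ∂P ≤ ENNReal.ofReal (Real.exp (t ^ 2 / 2)))
    (α : ℝ) (hα : α ∈ Set.Ioo (0 : ℝ) 1) :
    P {ω | ∃ k : ℕ, 1 ≤ k ∧
        1.7 * Real.sqrt (k * (Real.log (Real.log (2 * k)) + 0.72 * Real.log (5.2 / α)))
          ≤ ∑ j ∈ Finset.range k, Z j ω} ≤ ENNReal.ofReal α := by
  obtain ⟨hα0, hα1⟩ := hα
  set A := 0.72 * log (5.2 / α)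
  have hsubG : ∀ j, HasSubgaussianMGF (Z j) 1 P := fun j ↦
    hasSubgaussianMGF_of_lintegral_exp_le (hmeas j) (by simpa using hsub j)
  set E : ℕ → Set Ω := fun m ↦ {ω | ∃ k : ℕ, epochExponent A m
    ≤ epochTilt A m * ∑ j ∈ Finset.range (k + 1), Z j ω
      - (k + 1) * (((1 : ℝ≥0) : ℝ) * epochTilt A m ^ 2 / 2)}
  calc P {ω | ∃ k : ℕ, 1 ≤ k ∧ 1.7 * √(k * (log (log (2 * k)) + A)) ≤ ∑ j ∈ Finset.range k, Z j ω}
      ≤ P (⋃ m, E m) := by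
        refine measure_mono fun ω ⟨k, hk, hS⟩ ↦ ?_
        obtain ⟨m, hm⟩ := exists_epochExponent_le hk hS
        obtain ⟨k, rfl⟩ := Nat.exists_eq_add_of_le' hk
        exact mem_iUnion.2 ⟨m, k, by push_cast at hm ⊢; linarith⟩
    _ ≤ ∑' m, P (E m) := measure_iUnion_le _
    _ ≤ ∑' m, ENNReal.ofReal (exp (-epochExponent A m)) := ENNReal.tsum_le_tsum fun m ↦
        measure_exists_le_mul_sum_sub_le_exp_neg hmeas hindep hsubG _ _
    _ ≤ ENNReal.ofReal α := ENNReal.tsum_le_of_sum_range_le fun M ↦ by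
        rw [← ENNReal.ofReal_sum_of_nonneg fun m _ ↦ (exp_pos _).le]
        exact ENNReal.ofReal_le_ofReal (sum_range_exp_neg_epochExponent_le hα0 hα1.le M)
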